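/- Let R be a commutative ring and q, z ∈ R. Then for every natural number N, Σ_{n=0}^{N} [N n]_q · q^{n(n−1)/2} · (−z)^n = ∏_{i=0}^{N−1} (1 − z·q^i), i.e. the alternating Gaussian-binomial sum equals the q-Pochhammer symbol (z;q)_N. -/
import Mathlib


/-!
Statement 8: the alternating Gaussian-binomial sum equals the q-Pochhammer symbol:
`Σ_{n=0}^{N} [N n]_q q^{n(n−1)/2} (−z)^n = (z;q)_N = ∏_{i=0}^{N−1} (1 − z q^i)`.
-/

/-- The Gaussian binomial coefficient `[k m]_q` evaluated at an element `q` of a ring,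
defined by `[k 0]_q = 1`, `[0 (m+1)]_q = 0` and the q-Pascal recurrence
`[k+1, m+1]_q = [k m]_q + q^(m+1) * [k, m+1]_q`. -/
def qBinom {R : Type*} [Ring R] (q : R) : ℕ → ℕ → R
  | _, 0 => 1
  | 0, _ + 1 => 0
  | k + 1, m + 1 => qBinom q k m + q ^ (m + 1) * qBinom q k (m + 1)

lemma qBinom_eq_zero {R : Type*} [Ring R] (q : R) : ∀ k m, k < m → qBinom q k m = 0
  | 0, _ + 1, _ => rfl
  | k + 1, m + 1, h => by
    rw [qBinom, qBinom_eq_zero q k m (by omega), qBinom_eq_zero q k (m + 1) (by omega)]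
    simp

lemma tri (m : ℕ) : (m + 1) * m / 2 = m * (m - 1) / 2 + m := by
  have h : (m + 1) * m / 2 = (m + 1).choose 2 := by
    rw [Nat.choose_two_right]; simp
  rw [h, Nat.choose_succ_succ, Nat.choose_one_right, Nat.choose_two_right]
  omega

theorem qBinom_sum_eq_qPochhammer {R : Type*} [CommRing R] (q z : R) (N : ℕ) :
    ∑ n ∈ Finset.range (N + 1), qBinom q N n * q ^ (n * (n - 1) / 2) * (-z) ^ n =
      ∏ i ∈ Finset.range N, (1 - z * q ^ i) := by
  induction N generalizing z with
  | zero => simp [qBinom]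
  | succ N ih =>
    set g : ℕ → R := fun n => qBinom q N n * q ^ (n * (n - 1) / 2 + n) * (-z) ^ n with hg
    have hprod : ∏ i ∈ Finset.range (N + 1), (1 - z * q ^ i)
        = (∑ n ∈ Finset.range (N + 1), g n) * (1 - z) := by
      rw [Finset.prod_range_succ']
      congr 1
      · have : ∀ i ∈ Finset.range N, (1 - z * q ^ (i + 1)) = (1 - (z * q) * q ^ i) := by
          intro i _; ring
        rw [Finset.prod_congr rfl this, ← ih (z * q)]
        refine Finset.sum_congr rfl fun n _ => ?_
        rw [hg]
        rw [show -(z * q) = -z * q from by ring, mul_pow]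
        simp only [pow_add]
        ring
      · simp
    rw [hprod]
    have hsum2 : ∑ m ∈ Finset.range (N + 1), g (m + 1) + g 0
        = ∑ n ∈ Finset.range (N + 2), g n := (Finset.sum_range_succ' g (N + 1)).symm
    have hgN : g (N + 1) = 0 := by
      rw [hg]; simp [qBinom_eq_zero q N (N + 1) (by omega)]
    have hg0 : g 0 = 1 := by rw [hg]; simp [qBinom]
    have htop : ∑ n ∈ Finset.range (N + 2), g n = ∑ n ∈ Finset.range (N + 1), g n := by
      rw [Finset.sum_range_succ, hgN, add_zero]
    rw [Finset.sum_range_succ' (fun n => qBinom q (N + 1) n * q ^ (n * (n - 1) / 2) * (-z) ^ n)]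
    have hterm : ∀ m ∈ Finset.range (N + 1),
        qBinom q (N + 1) (m + 1) * q ^ ((m + 1) * ((m + 1) - 1) / 2) * (-z) ^ (m + 1)
          = -z * g m + g (m + 1) := by
      intro m _
      simp only [Nat.add_sub_cancel, hg]
      rw [qBinom, tri m]
      simp only [pow_add, pow_succ]
      ring
    rw [Finset.sum_congr rfl hterm, Finset.sum_add_distrib, ← Finset.mul_sum]
    have := hsum2.trans htop
    simp only [qBinom, pow_zero, mul_one, one_mul]
    have hq0 : qBinom q N 0 = (1 : R) := by simp [qBinom]
    linear_combination this - hq0
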